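/- Let n ≥ 1 and β > −1, and define v : (−1,1) → ℝ by v(h) = μ_{n,β}({x ∈ ℝⁿ : xₙ ≥ h}), the beta measure of the cap of Bₙ cut off by the halfspace {xₙ ≥ h}. Then for every h ∈ (−1,1), v is differentiable at h with v'(h) = −c_{1,β+(n−1)/2} · (1−h²)^{β+(n−1)/2}. -/

import Mathlib

open MeasureTheory

/-- The normalization constant `c_{m,β} = Γ(m/2+β+1)/(π^{m/2} Γ(β+1))` of the
beta distribution on the unit ball of `ℝ^m`. -/
noncomputable def betaConst (m : ℕ) (β : ℝ) : ℝ :=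
  Real.Gamma ((m : ℝ) / 2 + β + 1) / (Real.pi ^ ((m : ℝ) / 2) * Real.Gamma (β + 1))

/-- The density `f_{m,β}(x) = c_{m,β}(1−‖x‖²)^β · 1_{‖x‖<1}` of the beta distribution. -/
noncomputable def betaDensity (m : ℕ) (β : ℝ) (x : EuclideanSpace ℝ (Fin m)) : ℝ :=
  if ‖x‖ < 1 then betaConst m β * (1 - ‖x‖ ^ 2) ^ β else 0

/-- The beta probability measure `μ_{m,β}` on the unit ball of `ℝ^m`. -/
noncomputable def betaMeasure (m : ℕ) (β : ℝ) : Measure (EuclideanSpace ℝ (Fin m)) :=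
  volume.withDensity fun x => ENNReal.ofReal (betaDensity m β x)

/-!
By Fubini, the last coordinate of a `μ_{m+1,β}`-distributed point has density
`c_{1,γ} (1 - t²)₊^γ` with `γ = β + m/2`: the fibre over `t` is the ball of radius `√(1 - t²)`
in `ℝ^m`, on which `(1 - t² - ‖y‖²)^β` integrates, after rescaling, to `(1 - t²)^γ / c_{m,β}`,
and `c_{m+1,β} / c_{m,β} = c_{1,γ}`. The cap measure is the integral of this density over
`[h, ∞)`, so the fundamental theorem of calculus gives the derivative. The normalisation
`∫ (1 - ‖x‖²)₊^β dx = 1 / c_{m,β}` comes from polar coordinates and a beta integral.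
-/

open Set Module Real Topology
open ProbabilityTheory (beta beta_pos betaPDFReal betaPDFReal_pos lintegral_betaPDF_eq_one)

lemma hasDerivAt_integral_Ici {F : Type*} [NormedAddCommGroup F] [NormedSpace ℝ F]
    [CompleteSpace F] {f : ℝ → F} {a : ℝ} (hf : Integrable f)
    (hmeas : StronglyMeasurableAtFilter f (𝓝 a)) (ha : ContinuousAt f a) :
    HasDerivAt (fun s => ∫ x in Ici s, f x) (-f a) a := by
  have hsplit : (fun s => ∫ x in Ici s, f x) =
      fun s => (∫ x in Ici a, f x) - ∫ x in a..s, f x := by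
    ext s
    rw [← intervalIntegral.integral_Ici_sub_Ici' hf.integrableOn hf.integrableOn, sub_sub_cancel]
  rw [hsplit]
  exact (intervalIntegral.integral_hasDerivAt_right hf.intervalIntegrable hmeas ha).const_sub _

lemma integral_betaPDFReal {a b : ℝ} (ha : 0 < a) (hb : 0 < b) :
    ∫ x, betaPDFReal a b x = 1 := by
  have hnonneg : 0 ≤ betaPDFReal a b := fun x => by
    unfold betaPDFReal
    split_ifs with hx
    · exact (betaPDFReal_pos hx.1 hx.2 ha hb).le.trans_eq (if_pos hx)
    · exact le_rfl
  rw [integral_eq_lintegral_of_nonneg_ae (.of_forall hnonneg) (by fun_prop)]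
  rw [show ∫⁻ x, ENNReal.ofReal (betaPDFReal a b x) = 1 from lintegral_betaPDF_eq_one ha hb,
    ENNReal.toReal_one]

/-- The beta density up to normalisation, as a function of the squared radius `u = ‖x‖²`. -/
noncomputable def betaProfile (β u : ℝ) : ℝ := if u < 1 then (1 - u) ^ β else 0

lemma betaProfile_nonneg (β u : ℝ) : 0 ≤ betaProfile β u := by
  unfold betaProfile
  split_ifs with hu
  · exact rpow_nonneg (by linarith) _
  · exact le_rfl

@[fun_prop]
lemma measurable_betaProfile (β : ℝ) : Measurable (betaProfile β) :=
  Measurable.ite measurableSet_Iio (by fun_prop) measurable_const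

lemma betaProfile_of_lt {β u : ℝ} (hu : u < 1) : betaProfile β u = (1 - u) ^ β := if_pos hu

lemma betaProfile_of_le {β u : ℝ} (hu : 1 ≤ u) : betaProfile β u = 0 := if_neg hu.not_gt

lemma continuousAt_betaProfile {β u : ℝ} (hu : u < 1) : ContinuousAt (betaProfile β) u := by
  have hloc : (fun v => (1 - v) ^ β) =ᶠ[𝓝 u] betaProfile β := by
    filter_upwards [Iio_mem_nhds hu] with v hv using (betaProfile_of_lt hv).symm
  exact ((continuousAt_const.sub continuousAt_id).rpow_const
    (Or.inl (sub_pos.mpr hu).ne')).congr hloc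

lemma betaDensity_eq_betaProfile (m : ℕ) (β : ℝ) (x : EuclideanSpace ℝ (Fin m)) :
    betaDensity m β x = betaConst m β * betaProfile β (‖x‖ ^ 2) := by
  by_cases hx : ‖x‖ < 1
  · rw [betaDensity, if_pos hx, betaProfile_of_lt (by nlinarith [norm_nonneg x])]
  · rw [betaDensity, if_neg hx, betaProfile_of_le (by nlinarith), mul_zero]

lemma betaConst_pos (m : ℕ) {β : ℝ} (hβ : -1 < β) : 0 < betaConst m β := by
  unfold betaConst
  have : (0 : ℝ) ≤ m / 2 := by positivity
  exact div_pos (Gamma_pos_of_pos (by linarith))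
    (mul_pos (rpow_pos_of_pos pi_pos _) (Gamma_pos_of_pos (by linarith)))

lemma betaConst_succ (m : ℕ) {β : ℝ} (hβ : -1 < β) :
    betaConst (m + 1) β = betaConst m β * betaConst 1 (β + m / 2) := by
  have : (0 : ℝ) ≤ m / 2 := by positivity
  have hΓ : Gamma (m / 2 + β + 1) ≠ 0 := (Gamma_pos_of_pos (by linarith)).ne'
  have hΓ₀ : Gamma (β + 1) ≠ 0 := (Gamma_pos_of_pos (by linarith)).ne'
  have hπ : (π : ℝ) ^ ((m : ℝ) / 2) ≠ 0 := (rpow_pos_of_pos pi_pos _).ne'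
  simp only [betaConst, Nat.cast_add, Nat.cast_one, add_div, rpow_add pi_pos]
  rw [show (1 : ℝ) / 2 + (β + m / 2) + 1 = m / 2 + 1 / 2 + β + 1 by ring,
    show β + m / 2 + 1 = m / 2 + β + 1 by ring]
  generalize Gamma (m / 2 + β + 1) = A at hΓ ⊢
  field_simp

/-- Substituting `u = r²` turns this into a beta integral. -/
lemma integral_Ioi_rpow_mul_betaProfile_sq {p β : ℝ} (hp : 0 < p) (hβ : -1 < β) :
    ∫ r in Ioi 0, r ^ (p - 1) * betaProfile β (r ^ 2) = beta (p / 2) (β + 1) / 2 := by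
  have hB := beta_pos (half_pos hp) (by linarith : 0 < β + 1)
  have hsubst := integral_comp_rpow_Ioi (fun u => u ^ (p / 2 - 1) * betaProfile β u) two_ne_zero
  have hlhs : ∀ r ∈ Ioi (0 : ℝ), (|(2 : ℝ)| * r ^ ((2 : ℝ) - 1)) •
      (fun u => u ^ (p / 2 - 1) * betaProfile β u) (r ^ (2 : ℝ)) =
      2 * (r ^ (p - 1) * betaProfile β (r ^ 2)) := by
    intro r hr
    have hr : 0 < r := hr
    have hsq : (r ^ 2) ^ (p / 2 - 1) = r ^ (p - 2) := by
      rw [← rpow_natCast, ← rpow_mul hr.le]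
      ring_nf
    simp only [smul_eq_mul, abs_two, rpow_two, hsq]
    rw [show p - 1 = p - 2 + 1 by ring, rpow_add_one hr.ne', show (2 : ℝ) - 1 = 1 by norm_num,
      rpow_one]
    ring
  have hrhs : ∀ u ∈ Ioi (0 : ℝ), u ^ (p / 2 - 1) * betaProfile β u =
      beta (p / 2) (β + 1) * betaPDFReal (p / 2) (β + 1) u := by
    intro u hu
    unfold betaPDFReal betaProfile
    by_cases hu1 : u < 1
    · rw [if_pos hu1, if_pos ⟨hu, hu1⟩, add_sub_cancel_right]
      field_simp
    · rw [if_neg hu1, if_neg (fun h => hu1 h.2), mul_zero, mul_zero]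
  rw [setIntegral_congr_fun measurableSet_Ioi hlhs, integral_const_mul,
    setIntegral_congr_fun measurableSet_Ioi hrhs, integral_const_mul,
    setIntegral_eq_integral_of_forall_compl_eq_zero
      (s := Ioi 0) (f := betaPDFReal (p / 2) (β + 1)) fun u hu => if_neg fun h => hu h.1,
    integral_betaPDFReal (half_pos hp) (by linarith)] at hsubst
  linarith

section InnerProductSpace

variable {E : Type*} [NormedAddCommGroup E] [InnerProductSpace ℝ E] [FiniteDimensional ℝ E]
  [MeasurableSpace E] [BorelSpace E]

lemma volume_univ_of_finrank_eq_zero (hE : finrank ℝ E = 0) : volume (univ : Set E) = 1 := by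
  have : Subsingleton E := finrank_zero_iff.mp hE
  rw [← (stdOrthonormalBasis ℝ E).volume_parallelepiped]
  refine congrArg _ (Subsingleton.eq_univ_of_nonempty ⟨0, ?_⟩).symm
  exact (mem_parallelepiped_iff _ _).mpr ⟨0, by simp, by simp⟩

lemma integral_betaProfile_norm_sq {β : ℝ} (hβ : -1 < β) :
    ∫ x : E, betaProfile β (‖x‖ ^ 2) = (betaConst (finrank ℝ E) β)⁻¹ := by
  rcases subsingleton_or_nontrivial E with hE | hE
  · have hd : finrank ℝ E = 0 := finrank_zero_of_subsingleton
    have hΓ : Gamma (β + 1) ≠ 0 := (Gamma_pos_of_pos (by linarith)).ne'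
    simp [Subsingleton.elim _ (0 : E), betaProfile, measureReal_def,
      volume_univ_of_finrank_eq_zero hd, hd, betaConst, hΓ]
  have hd : (1 : ℝ) ≤ finrank ℝ E := by exact_mod_cast finrank_pos (R := ℝ) (M := E)
  have hball : volume.real (Metric.ball (0 : E) 1) =
      π ^ ((finrank ℝ E : ℝ) / 2) / Gamma (finrank ℝ E / 2 + 1) := by
    rw [measureReal_def, InnerProductSpace.volume_ball, ENNReal.ofReal_one, one_pow, one_mul,
      ENNReal.toReal_ofReal (by positivity), sqrt_eq_rpow, ← rpow_natCast, ← rpow_mul pi_pos.le]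
    ring_nf
  have hradial : ∫ r in Ioi (0 : ℝ), r ^ (finrank ℝ E - 1) • betaProfile β (r ^ 2) =
      beta (finrank ℝ E / 2) (β + 1) / 2 := by
    rw [← integral_Ioi_rpow_mul_betaProfile_sq (by linarith) hβ]
    refine setIntegral_congr_fun measurableSet_Ioi fun r _ => ?_
    rw [smul_eq_mul, ← rpow_natCast, Nat.cast_sub (by exact_mod_cast hd), Nat.cast_one]
  rw [integral_fun_norm_addHaar volume (fun r => betaProfile β (r ^ 2)), hball, hradial,
    nsmul_eq_mul, smul_eq_mul, beta, betaConst, Gamma_add_one (by positivity)]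
  have : (0 : ℝ) ≤ finrank ℝ E / 2 := by positivity
  have hΓ : Gamma (finrank ℝ E / 2 + β + 1) ≠ 0 := (Gamma_pos_of_pos (by linarith)).ne'
  have hΓd : Gamma (finrank ℝ E / 2) ≠ 0 := (Gamma_pos_of_pos (by linarith)).ne'
  rw [show (finrank ℝ E : ℝ) / 2 + (β + 1) = finrank ℝ E / 2 + β + 1 by ring]
  field_simp

lemma integral_betaProfile_add_norm_sq {β : ℝ} (hβ : -1 < β) (u : ℝ) :
    ∫ y : E, betaProfile β (u + ‖y‖ ^ 2) =
      betaProfile (β + finrank ℝ E / 2) u / betaConst (finrank ℝ E) β := by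
  rcases le_or_gt 1 u with hu | hu
  · have hzero (y : E) : betaProfile β (u + ‖y‖ ^ 2) = 0 :=
      betaProfile_of_le (le_add_of_le_of_nonneg hu (sq_nonneg _))
    simp [hzero, betaProfile_of_le hu]
  set R := √(1 - u)
  have hR : 0 < R := sqrt_pos.mpr (by linarith)
  have hscale (y : E) :
      betaProfile β (u + ‖y‖ ^ 2) = (1 - u) ^ β * betaProfile β (‖R⁻¹ • y‖ ^ 2) := by
    have hnorm : ‖R⁻¹ • y‖ ^ 2 = ‖y‖ ^ 2 / (1 - u) := by
      rw [norm_smul, mul_pow, norm_inv, norm_of_nonneg hR.le, inv_pow, sq_sqrt (by linarith)]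
      ring
    rw [hnorm]
    rcases lt_or_ge (u + ‖y‖ ^ 2) 1 with hy | hy
    · rw [betaProfile_of_lt hy, betaProfile_of_lt ((div_lt_one (by linarith)).mpr (by linarith)),
        ← mul_rpow (by linarith) (by rw [sub_nonneg, div_le_one (by linarith)]; linarith)]
      congr 1
      field_simp
      ring
    · rw [betaProfile_of_le hy, betaProfile_of_le ((one_le_div (by linarith)).mpr (by linarith)),
        mul_zero]
  have hRpow : R ^ finrank ℝ E = (1 - u) ^ ((finrank ℝ E : ℝ) / 2) := by
    rw [show R = (1 - u) ^ (1 / 2 : ℝ) from sqrt_eq_rpow _, ← rpow_natCast,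
      ← rpow_mul (by linarith)]
    ring_nf
  simp_rw [hscale]
  rw [integral_const_mul,
    Measure.integral_comp_inv_smul_of_nonneg volume (fun y : E => betaProfile β (‖y‖ ^ 2)) hR.le,
    integral_betaProfile_norm_sq hβ, betaProfile_of_lt hu, smul_eq_mul, hRpow,
    rpow_add (by linarith)]
  ring

lemma integrable_betaProfile_add_norm_sq {β : ℝ} (hβ : -1 < β) (u : ℝ) :
    Integrable fun y : E => betaProfile β (u + ‖y‖ ^ 2) := by
  rcases le_or_gt 1 u with hu | hu
  · have hzero (y : E) : betaProfile β (u + ‖y‖ ^ 2) = 0 :=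
      betaProfile_of_le (le_add_of_le_of_nonneg hu (sq_nonneg _))
    simp [hzero]
  refine .of_integral_ne_zero ?_
  rw [integral_betaProfile_add_norm_sq hβ, betaProfile_of_lt hu]
  exact (div_pos (rpow_pos_of_pos (by linarith) _) (betaConst_pos _ hβ)).ne'

end InnerProductSpace

lemma isProbabilityMeasure_betaMeasure (m : ℕ) {β : ℝ} (hβ : -1 < β) :
    IsProbabilityMeasure (betaMeasure m β) := by
  have hc := betaConst_pos m hβ
  have hint := (integrable_betaProfile_add_norm_sq (E := EuclideanSpace ℝ (Fin m)) hβ 0).const_mul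
    (betaConst m β)
  simp only [zero_add] at hint
  constructor
  rw [betaMeasure, withDensity_apply _ MeasurableSet.univ, Measure.restrict_univ]
  simp_rw [betaDensity_eq_betaProfile]
  rw [← ofReal_integral_eq_lintegral_ofReal hint
      (.of_forall fun x => mul_nonneg hc.le (betaProfile_nonneg _ _)),
    integral_const_mul, integral_betaProfile_norm_sq hβ, finrank_euclideanSpace_fin,
    mul_inv_cancel₀ hc.ne', ENNReal.ofReal_one]

noncomputable def splitLast (m : ℕ) :
    EuclideanSpace ℝ (Fin (m + 1)) ≃ᵐ ℝ × EuclideanSpace ℝ (Fin m) :=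
  (MeasurableEquiv.toLp 2 (Fin (m + 1) → ℝ)).symm.trans <|
    (MeasurableEquiv.piFinSuccAbove (fun _ => ℝ) (Fin.last m)).trans <|
      .prodCongr (.refl ℝ) (MeasurableEquiv.toLp 2 (Fin m → ℝ))

lemma splitLast_fst (m : ℕ) (x : EuclideanSpace ℝ (Fin (m + 1))) :
    (splitLast m x).1 = x (Fin.last m) := rfl

lemma norm_sq_eq_splitLast (m : ℕ) (x : EuclideanSpace ℝ (Fin (m + 1))) :
    ‖x‖ ^ 2 = (splitLast m x).1 ^ 2 + ‖(splitLast m x).2‖ ^ 2 := by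
  rw [EuclideanSpace.real_norm_sq_eq, EuclideanSpace.real_norm_sq_eq, Fin.sum_univ_castSucc,
    add_comm]
  congr 1
  refine Finset.sum_congr rfl fun j _ => ?_
  rw [← Fin.succAbove_last]
  rfl

lemma measurePreserving_splitLast (m : ℕ) :
    MeasurePreserving (splitLast m) volume (volume.prod volume) := by
  have hpi := measurePreserving_piFinSuccAbove (fun _ : Fin (m + 1) => (volume : Measure ℝ))
    (Fin.last m)
  rw [← volume_pi] at hpi
  exact (((MeasurePreserving.id volume).prod
    (EuclideanSpace.volume_preserving_symm_measurableEquiv_toLp (Fin m)).symm).comp hpi).comp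
    (EuclideanSpace.volume_preserving_symm_measurableEquiv_toLp (Fin (m + 1)))

/-- The density of the last coordinate under `μ_{m+1,β}`. -/
noncomputable def betaMarginalDensity (m : ℕ) (β t : ℝ) : ℝ :=
  betaConst 1 (β + m / 2) * betaProfile (β + m / 2) (t ^ 2)

@[fun_prop]
lemma measurable_betaMarginalDensity (m : ℕ) (β : ℝ) : Measurable (betaMarginalDensity m β) := by
  unfold betaMarginalDensity
  fun_prop

lemma betaMarginalDensity_nonneg (m : ℕ) {β : ℝ} (hβ : -1 < β) (t : ℝ) :
    0 ≤ betaMarginalDensity m β t :=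
  mul_nonneg (betaConst_pos 1 (by linarith [show (0 : ℝ) ≤ m / 2 by positivity])).le
    (betaProfile_nonneg _ _)

lemma betaMeasure_preimage_last (m : ℕ) {β : ℝ} (hβ : -1 < β) {S : Set ℝ}
    (hS : MeasurableSet S) :
    betaMeasure (m + 1) β ((fun x => x (Fin.last m)) ⁻¹' S) =
      ∫⁻ t in S, ENNReal.ofReal (betaMarginalDensity m β t) := by
  set F : ℝ × EuclideanSpace ℝ (Fin m) → ENNReal := fun p =>
    ENNReal.ofReal (betaConst (m + 1) β * betaProfile β (p.1 ^ 2 + ‖p.2‖ ^ 2))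
  have hF : Measurable F := by fun_prop
  have hpre : (fun x => x (Fin.last m)) ⁻¹' S = splitLast m ⁻¹' (S ×ˢ univ) := by
    ext x
    simp [splitLast_fst]
  have hfiber (t : ℝ) : ∫⁻ y, F (t, y) = ENNReal.ofReal (betaMarginalDensity m β t) := by
    simp only [F, betaMarginalDensity]
    rw [← ofReal_integral_eq_lintegral_ofReal
        ((integrable_betaProfile_add_norm_sq hβ _).const_mul _)
        (.of_forall fun y => mul_nonneg (betaConst_pos _ hβ).le (betaProfile_nonneg _ _)),
      integral_const_mul, integral_betaProfile_add_norm_sq hβ, finrank_euclideanSpace_fin,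
      betaConst_succ m hβ]
    have hc := betaConst_pos m hβ
    congr 1
    field_simp
  rw [hpre, betaMeasure, withDensity_apply _ ((splitLast m).measurable (hS.prod .univ))]
  have hdens (x : EuclideanSpace ℝ (Fin (m + 1))) :
      ENNReal.ofReal (betaDensity (m + 1) β x) = F (splitLast m x) := by
    rw [betaDensity_eq_betaProfile, norm_sq_eq_splitLast m]
  simp_rw [hdens]
  rw [(measurePreserving_splitLast m).setLIntegral_comp_preimage_emb
      (splitLast m).measurableEmbedding F, ← Measure.prod_restrict, Measure.restrict_univ,
    lintegral_prod _ hF.aemeasurable]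
  simp_rw [hfiber]

lemma integrable_betaMarginalDensity (m : ℕ) {β : ℝ} (hβ : -1 < β) :
    Integrable (betaMarginalDensity m β) := by
  have := isProbabilityMeasure_betaMeasure (m + 1) hβ
  have hmass := betaMeasure_preimage_last m hβ MeasurableSet.univ
  rw [preimage_univ, Measure.restrict_univ] at hmass
  rw [← lintegral_ofReal_ne_top_iff_integrable (by fun_prop)
    (.of_forall (betaMarginalDensity_nonneg m hβ)), ← hmass]
  exact measure_ne_top _ _

lemma betaMeasure_cap_eq_integral (m : ℕ) {β : ℝ} (hβ : -1 < β) (s : ℝ) :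
    (betaMeasure (m + 1) β {x | s ≤ x (Fin.last m)}).toReal =
      ∫ t in Ici s, betaMarginalDensity m β t := by
  rw [integral_eq_lintegral_of_nonneg_ae (.of_forall (betaMarginalDensity_nonneg m hβ))
    (by fun_prop), ← betaMeasure_preimage_last m hβ measurableSet_Ici]
  rfl

/-- The beta measure `v(h) = μ_{n,β}({xₙ ≥ h})` of the cap of `Bₙ` cut off
by `{xₙ ≥ h}` is differentiable on `(−1,1)` with
`v'(h) = −c_{1,β+(n−1)/2}·(1−h²)^{β+(n−1)/2}`. -/
theorem hasDerivAt_betaMeasure_cap (n : ℕ) (hn : 1 ≤ n) (β : ℝ) (hβ : -1 < β)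
    (h : ℝ) (hh : h ∈ Set.Ioo (-1 : ℝ) 1) :
    HasDerivAt (fun s : ℝ =>
        (betaMeasure n β {x : EuclideanSpace ℝ (Fin n) | s ≤ x ⟨n - 1, by omega⟩}).toReal)
      (-(betaConst 1 (β + ((n : ℝ) - 1) / 2) * (1 - h ^ 2) ^ (β + ((n : ℝ) - 1) / 2))) h := by
  obtain ⟨m, rfl⟩ : ∃ m, n = m + 1 := ⟨n - 1, by omega⟩
  have hh2 : h ^ 2 < 1 := by nlinarith [hh.1, hh.2]
  have hcont : ContinuousAt (betaMarginalDensity m β) h :=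
    continuousAt_const.mul <|
      (continuousAt_betaProfile hh2).comp (f := fun t => t ^ 2) (continuous_pow 2).continuousAt
  have hderiv := hasDerivAt_integral_Ici (integrable_betaMarginalDensity m hβ)
    (measurable_betaMarginalDensity m β).stronglyMeasurable.stronglyMeasurableAtFilter hcont
  rw [← funext (betaMeasure_cap_eq_integral m hβ)] at hderiv
  refine hderiv.congr_deriv ?_
  rw [betaMarginalDensity, betaProfile_of_lt hh2]
  push_cast
  ring_nf
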